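/- arXiv:2411.01364 — 2 statements merged into one kernel-verified Lean document; each statement's English description precedes it below -/
import Mathlib

section
/- On an order interval [μ, ν] ⊂ 𝒫₂(ℝ) of the stochastic order, the following modes of convergence are equivalent for a sequence ρₙ ∈ [μ,ν] and ρ ∈ [μ,ν]: (i) 𝒲₂(ρₙ, ρ) → 0; (ii) 𝒲_p(ρₙ, ρ) → 0 for all 1 ≤ p < 2; (iii) ρₙ → ρ weakly. -/
/-!
Every `ρ ∈ 𝒫(ℝ)` is the law of its quantile function `Q_ρ` under Lebesgue measure on `(0, 1)`, so
pairing quantile functions is a coupling and `𝒲_p(ρ, σ) ≤ ‖Q_ρ - Q_σ‖_{Lᵖ(0,1)}`. The stochastic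
order is the pointwise order of quantile functions, hence on `[μ, ν]` every quantile function is
dominated by `|Q_μ| + |Q_ν| ∈ L²`. Weak convergence gives convergence of the cdfs at continuity
points, hence a.e. convergence of the quantile functions, hence `𝒲₂`-convergence by Vitali's
theorem. Conversely `𝒲₂ ≥ 𝒲_p ≥ 𝒲₁`, and `𝒲₁` controls the integrals of bounded Lipschitz
functions, which determine weak convergence.
-/

open MeasureTheory Filter Set ENNReal

noncomputable section

/-- The stochastic order on measures on ℝ: `μ ≤_st ν` iff `∫ f dμ ≤ ∫ f dν`
for every bounded increasing function `f : ℝ → ℝ`. -/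
def StOrder (μ ν : Measure ℝ) : Prop :=
  ∀ f : ℝ → ℝ, Monotone f → (∃ C : ℝ, ∀ x, |f x| ≤ C) →
    ∫ x, f x ∂μ ≤ ∫ x, f x ∂ν

/-- `𝒫₂(ℝ)`: probability measures on ℝ with finite second moment. -/
def P2 : Set (Measure ℝ) :=
  {μ | IsProbabilityMeasure μ ∧ Integrable (fun x : ℝ => x ^ 2) μ}

/-- The `p`-Wasserstein distance (ENNReal-valued), as an infimum over couplings. -/
def Wp (p : ℝ) (μ ν : Measure ℝ) : ℝ≥0∞ :=
  ⨅ (π : Measure (ℝ × ℝ)) (_ : π.map Prod.fst = μ) (_ : π.map Prod.snd = ν),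
    (∫⁻ q, ENNReal.ofReal (|q.1 - q.2| ^ p) ∂π) ^ (1 / p)

/-- The 2-Wasserstein distance. -/
def W2 (μ ν : Measure ℝ) : ℝ≥0∞ := Wp 2 μ ν

/-- Convergence of a sequence of measures in the 2-Wasserstein distance. -/
def W2Tendsto (μs : ℕ → Measure ℝ) (μ : Measure ℝ) : Prop :=
  Tendsto (fun n => W2 (μs n) μ) atTop (nhds 0)

open ProbabilityTheory Topology

/-- The left-continuous quantile function; only its values on `(0, 1)` matter. -/
def quantile (ρ : Measure ℝ) (u : ℝ) : ℝ := sInf {x | u ≤ cdf ρ x}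

section Quantile

variable {ρ σ : Measure ℝ} {u : ℝ}

lemma nonempty_setOf_le_cdf (hu : u < 1) : {x | u ≤ cdf ρ x}.Nonempty :=
  (((tendsto_cdf_atTop ρ).eventually_const_lt hu).exists).imp fun _ => le_of_lt

lemma bddBelow_setOf_le_cdf (hu : 0 < u) : BddBelow {x | u ≤ cdf ρ x} := by
  obtain ⟨a, ha⟩ := eventually_atBot.mp ((tendsto_cdf_atBot ρ).eventually_lt_const hu)
  exact ⟨a, fun y hy => le_of_not_ge fun hya => (ha y hya).not_ge hy⟩

lemma le_cdf_quantile (hu : u < 1) : u ≤ cdf ρ (quantile ρ u) := by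
  have hright : Tendsto (cdf ρ) (𝓝[>] quantile ρ u) (𝓝 (cdf ρ (quantile ρ u))) :=
    ((cdf ρ).right_continuous _).tendsto.mono_left (nhdsWithin_mono _ Ioi_subset_Ici_self)
  refine ge_of_tendsto hright (eventually_nhdsWithin_of_forall fun y hy => ?_)
  obtain ⟨x, hx, hxy⟩ := exists_lt_of_csInf_lt (nonempty_setOf_le_cdf hu) hy
  exact hx.trans (monotone_cdf ρ hxy.le)

lemma quantile_le_iff (hu : u ∈ Ioo (0 : ℝ) 1) {x : ℝ} : quantile ρ u ≤ x ↔ u ≤ cdf ρ x :=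
  ⟨fun h => (le_cdf_quantile hu.2).trans (monotone_cdf ρ h),
    fun h => csInf_le (bddBelow_setOf_le_cdf hu.1) h⟩

lemma monotoneOn_quantile : MonotoneOn (quantile ρ) (Ioo 0 1) := fun _ hu _ hv huv =>
  (quantile_le_iff hu).2 (huv.trans (le_cdf_quantile hv.2))

lemma aemeasurable_quantile : AEMeasurable (quantile ρ) (volume.restrict (Ioo 0 1)) :=
  aemeasurable_restrict_of_monotoneOn measurableSet_Ioo monotoneOn_quantile

lemma map_quantile [IsProbabilityMeasure ρ] : (volume.restrict (Ioo 0 1)).map (quantile ρ) = ρ := by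
  refine Measure.ext_of_Iic _ _ fun x => ?_
  have hpre : quantile ρ ⁻¹' Iic x ∩ Ioo 0 1 = Iic (cdf ρ x) ∩ Ioo 0 1 := by
    ext u
    simp only [mem_inter_iff, mem_preimage, mem_Iic]
    exact and_congr_left fun hu => quantile_le_iff hu
  rw [Measure.map_apply_of_aemeasurable aemeasurable_quantile measurableSet_Iic,
    Measure.restrict_apply' measurableSet_Ioo, hpre, ← Measure.restrict_apply' measurableSet_Ioo,
    Measure.restrict_congr_set Ioo_ae_eq_Ioc, Measure.restrict_apply' measurableSet_Ioc,
    inter_comm, Ioc_inter_Iic, min_eq_right (cdf_le_one ρ x), Real.volume_Ioc, sub_zero,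
    ofReal_cdf]

lemma memLp_two_quantile [IsProbabilityMeasure ρ] (hρ : Integrable (fun x => x ^ 2) ρ) :
    MemLp (quantile ρ) 2 (volume.restrict (Ioo 0 1)) := by
  have hid : MemLp id 2 ρ := (memLp_two_iff_integrable_sq aestronglyMeasurable_id).2 hρ
  rw [← map_quantile (ρ := ρ)] at hid
  exact (memLp_map_measure_iff aestronglyMeasurable_id aemeasurable_quantile).1 hid

lemma StOrder.cdf_le [IsProbabilityMeasure ρ] [IsProbabilityMeasure σ] (h : StOrder ρ σ) (t : ℝ) :
    cdf σ t ≤ cdf ρ t := by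
  have hmono : Monotone (-(Iic t).indicator (1 : ℝ → ℝ)) := fun x y hxy => by
    by_cases hy : y ≤ t
    · simp [hy, hxy.trans hy]
    · by_cases hx : x ≤ t <;> simp [hx, hy]
  have hbdd : ∃ C, ∀ x, |(-(Iic t).indicator (1 : ℝ → ℝ)) x| ≤ C :=
    ⟨1, fun x => by by_cases hx : x ≤ t <;> simp [hx]⟩
  have := h _ hmono hbdd
  simp only [Pi.neg_apply, integral_neg, integral_indicator_one measurableSet_Iic] at this
  rw [cdf_eq_real, cdf_eq_real]
  exact neg_le_neg_iff.1 this

lemma StOrder.quantile_le [IsProbabilityMeasure ρ] [IsProbabilityMeasure σ] (h : StOrder ρ σ)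
    (hu : u ∈ Ioo (0 : ℝ) 1) : quantile ρ u ≤ quantile σ u :=
  (quantile_le_iff hu).2 ((le_cdf_quantile hu.2).trans (h.cdf_le _))

lemma abs_quantile_le_of_stOrder {μ ν : Measure ℝ} [IsProbabilityMeasure μ]
    [IsProbabilityMeasure ν] [IsProbabilityMeasure ρ] (hμ : StOrder μ ρ) (hν : StOrder ρ ν)
    (hu : u ∈ Ioo (0 : ℝ) 1) : |quantile ρ u| ≤ |quantile μ u| + |quantile ν u| := by
  have := hμ.quantile_le hu
  have := hν.quantile_le hu
  rw [abs_le]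
  constructor <;> cases abs_cases (quantile μ u) <;> cases abs_cases (quantile ν u) <;> linarith

lemma tendsto_quantile_of_tendsto_cdf {ρs : ℕ → Measure ℝ}
    (hcdf : ∀ t, ContinuousAt (cdf ρ) t → Tendsto (fun n => cdf (ρs n) t) atTop (𝓝 (cdf ρ t)))
    (hu : u ∈ Ioo (0 : ℝ) 1) (hcont : ContinuousAt (quantile ρ) u) :
    Tendsto (fun n => quantile (ρs n) u) atTop (𝓝 (quantile ρ u)) := by
  have hdense : Dense {t | ContinuousAt (cdf ρ) t} := by
    simpa only [compl_ofPred, not_not] using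
      ((monotone_cdf ρ).countable_not_continuousAt).dense_compl ℝ
  refine tendsto_order.2 ⟨fun b hb => ?_, fun b hb => ?_⟩
  · obtain ⟨x, hx, hbx, hxq⟩ := hdense.exists_between hb
    have hxu : cdf ρ x < u := lt_of_not_ge fun h => hxq.not_ge ((quantile_le_iff hu).2 h)
    filter_upwards [(hcdf x hx).eventually_lt_const hxu] with n hn
    exact hbx.trans (lt_of_not_ge fun h => hn.not_ge ((quantile_le_iff hu).1 h))
  · -- a slightly larger level `v` still has `quantile ρ v < b`, which forces `u < cdf ρ x`
    have hev : ∀ᶠ v in 𝓝[>] u, quantile ρ v < b ∧ v ∈ Ioo (0 : ℝ) 1 :=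
      nhdsWithin_le_nhds ((hcont.eventually (gt_mem_nhds hb)).and (isOpen_Ioo.mem_nhds hu))
    obtain ⟨v, ⟨hvb, hv⟩, huv : u < v⟩ := (hev.and self_mem_nhdsWithin).exists
    obtain ⟨x, hx, hvx, hxb⟩ := hdense.exists_between hvb
    have hux : u < cdf ρ x := huv.trans_le ((quantile_le_iff hv).1 hvx.le)
    filter_upwards [(hcdf x hx).eventually_const_lt hux] with n hn
    exact ((quantile_le_iff hu).2 hn.le).trans_lt hxb

lemma ae_tendsto_quantile_of_tendsto_cdf {ρs : ℕ → Measure ℝ}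
    (hcdf : ∀ t, ContinuousAt (cdf ρ) t → Tendsto (fun n => cdf (ρs n) t) atTop (𝓝 (cdf ρ t))) :
    ∀ᵐ u ∂(volume.restrict (Ioo 0 1)), Tendsto (fun n => quantile (ρs n) u) atTop
      (𝓝 (quantile ρ u)) := by
  have hjumps := (monotoneOn_quantile (ρ := ρ)).countable_not_continuousWithinAt
  filter_upwards [ae_restrict_mem measurableSet_Ioo,
    ae_restrict_of_ae (hjumps.ae_notMem volume)] with u hu hcont
  refine tendsto_quantile_of_tendsto_cdf hcdf hu ?_
  exact (not_and_not_right.1 hcont hu).continuousAt (isOpen_Ioo.mem_nhds hu)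

end Quantile

section Wasserstein

variable {p : ℝ} {μ ν : Measure ℝ}

lemma Wp_eq_iInf_eLpNorm (hp : 0 < p) (μ ν : Measure ℝ) :
    Wp p μ ν = ⨅ (π : Measure (ℝ × ℝ)) (_ : π.map Prod.fst = μ) (_ : π.map Prod.snd = ν),
      eLpNorm (fun q : ℝ × ℝ => q.1 - q.2) (ENNReal.ofReal p) π := by
  have hcost : ∀ q : ℝ × ℝ, ENNReal.ofReal (|q.1 - q.2| ^ p) = ‖q.1 - q.2‖ₑ ^ p := fun q => by
    rw [Real.enorm_eq_ofReal_abs, ENNReal.ofReal_rpow_of_nonneg (abs_nonneg _) hp.le]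
  simp only [Wp, hcost, eLpNorm_eq_eLpNorm' (ENNReal.ofReal_pos.2 hp).ne' ofReal_ne_top,
    ENNReal.toReal_ofReal hp.le, eLpNorm']

lemma Wp_le_eLpNorm_of_coupling (hp : 0 < p) {π : Measure (ℝ × ℝ)} (h₁ : π.map Prod.fst = μ)
    (h₂ : π.map Prod.snd = ν) :
    Wp p μ ν ≤ eLpNorm (fun q : ℝ × ℝ => q.1 - q.2) (ENNReal.ofReal p) π := by
  rw [Wp_eq_iInf_eLpNorm hp]
  exact iInf_le_of_le π (iInf_le_of_le h₁ (iInf_le _ h₂))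

lemma isProbabilityMeasure_of_coupling [IsProbabilityMeasure μ] {π : Measure (ℝ × ℝ)}
    (h₁ : π.map Prod.fst = μ) : IsProbabilityMeasure π :=
  have : IsProbabilityMeasure (π.map Prod.fst) := h₁ ▸ inferInstance
  Measure.isProbabilityMeasure_of_map Prod.fst

lemma Wp_mono_exponent {q : ℝ} (hp : 0 < p) (hpq : p ≤ q) [IsProbabilityMeasure μ]
    (ν : Measure ℝ) : Wp p μ ν ≤ Wp q μ ν := by
  rw [Wp_eq_iInf_eLpNorm hp, Wp_eq_iInf_eLpNorm (hp.trans_le hpq)]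
  refine iInf₂_mono fun π h₁ => iInf_mono fun _ => ?_
  have := isProbabilityMeasure_of_coupling h₁
  exact eLpNorm_le_eLpNorm_of_exponent_le (ENNReal.ofReal_le_ofReal hpq)
    (measurable_fst.sub measurable_snd).aestronglyMeasurable

lemma Wp_le_eLpNorm_quantile_sub (hp : 0 < p) [IsProbabilityMeasure μ] [IsProbabilityMeasure ν] :
    Wp p μ ν ≤
      eLpNorm (quantile μ - quantile ν) (ENNReal.ofReal p) (volume.restrict (Ioo 0 1)) := by
  have hφ : AEMeasurable (fun u => (quantile μ u, quantile ν u)) (volume.restrict (Ioo 0 1)) :=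
    aemeasurable_quantile.prodMk aemeasurable_quantile
  have h₁ := AEMeasurable.map_map_of_aemeasurable measurable_fst.aemeasurable hφ
  have h₂ := AEMeasurable.map_map_of_aemeasurable measurable_snd.aemeasurable hφ
  refine (Wp_le_eLpNorm_of_coupling hp (h₁.trans map_quantile) (h₂.trans map_quantile)).trans_eq ?_
  exact eLpNorm_map_measure (measurable_fst.sub measurable_snd).aestronglyMeasurable hφ

lemma edist_integral_le_mul_eLpNorm_of_coupling {f : ℝ → ℝ} {L : NNReal} (hf : LipschitzWith L f)
    (hμ : Integrable f μ) (hν : Integrable f ν) {π : Measure (ℝ × ℝ)} (h₁ : π.map Prod.fst = μ)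
    (h₂ : π.map Prod.snd = ν) :
    edist (∫ x, f x ∂μ) (∫ x, f x ∂ν) ≤ L * eLpNorm (fun q : ℝ × ℝ => q.1 - q.2) 1 π := by
  subst h₁ h₂
  have hfst : Integrable (fun q : ℝ × ℝ => f q.1) π :=
    (integrable_map_measure hμ.aestronglyMeasurable measurable_fst.aemeasurable).1 hμ
  have hsnd : Integrable (fun q : ℝ × ℝ => f q.2) π :=
    (integrable_map_measure hν.aestronglyMeasurable measurable_snd.aemeasurable).1 hν
  rw [integral_map measurable_fst.aemeasurable hμ.aestronglyMeasurable,
    integral_map measurable_snd.aemeasurable hν.aestronglyMeasurable, edist_eq_enorm_sub,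
    ← integral_sub hfst hsnd, eLpNorm_one_eq_lintegral_enorm, ← lintegral_const_mul' _ _ coe_ne_top]
  refine (enorm_integral_le_lintegral_enorm _).trans (lintegral_mono fun q => ?_)
  simpa only [edist_eq_enorm_sub] using hf.edist_le_mul q.1 q.2

lemma edist_integral_le_mul_Wp_one [IsProbabilityMeasure μ] [IsProbabilityMeasure ν] {f : ℝ → ℝ}
    {L : NNReal} (hf : LipschitzWith L f) (hμ : Integrable f μ) (hν : Integrable f ν) :
    edist (∫ x, f x ∂μ) (∫ x, f x ∂ν) ≤ L * Wp 1 μ ν := by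
  rcases eq_or_ne L 0 with rfl | hL
  · simpa using edist_integral_le_mul_eLpNorm_of_coupling hf hμ hν
      (π := μ.prod ν) (by simp) (by simp)
  rw [Wp_eq_iInf_eLpNorm one_pos, ENNReal.ofReal_one]
  simp only [ENNReal.mul_iInf_of_ne (coe_ne_zero.2 hL) coe_ne_top]
  exact le_iInf₂ fun π h₁ => le_iInf fun h₂ =>
    edist_integral_le_mul_eLpNorm_of_coupling hf hμ hν h₁ h₂

end Wasserstein

lemma unifIntegrable_of_dominated {ι α β : Type*} [MeasurableSpace α] [NormedAddCommGroup β]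
    {μ : Measure α} {p : ℝ≥0∞} (hp : 1 ≤ p) (hp' : p ≠ ∞) {f : ι → α → β} {g : α → ℝ}
    (hg : MemLp g p μ) (hfg : ∀ i, ∀ᵐ x ∂μ, ‖f i x‖ ≤ g x) : UnifIntegrable f p μ := by
  intro ε hε
  obtain ⟨δ, hδ, hgδ⟩ := unifIntegrable_const (ι := Unit) hp hp' hg hε
  refine ⟨δ, hδ, fun i s hs hμs => (eLpNorm_mono_ae ?_).trans (hgδ () s hs hμs)⟩
  filter_upwards [hfg i] with x hx
  by_cases hxs : x ∈ s
  · simpa [hxs] using hx.trans (le_abs_self _)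
  · simp [hxs]

lemma tendsto_W2_of_ae_tendsto_quantile {ρs : ℕ → Measure ℝ} {ρ μ ν : Measure ℝ}
    [∀ n, IsProbabilityMeasure (ρs n)] [IsProbabilityMeasure ρ] [IsProbabilityMeasure μ]
    [IsProbabilityMeasure ν] (hρ : Integrable (fun x => x ^ 2) ρ)
    (hμ : Integrable (fun x => x ^ 2) μ) (hν : Integrable (fun x => x ^ 2) ν)
    (hdom : ∀ n, ∀ u ∈ Ioo (0 : ℝ) 1, |quantile (ρs n) u| ≤ |quantile μ u| + |quantile ν u|)
    (hae : ∀ᵐ u ∂(volume.restrict (Ioo 0 1)),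
      Tendsto (fun n => quantile (ρs n) u) atTop (𝓝 (quantile ρ u))) :
    Tendsto (fun n => W2 (ρs n) ρ) atTop (𝓝 0) := by
  have hL2 : Tendsto
      (fun n => eLpNorm (quantile (ρs n) - quantile ρ) 2 (volume.restrict (Ioo 0 1))) atTop (𝓝 0) :=
    tendsto_Lp_finite_of_tendsto_ae one_le_two ofNat_ne_top
      (fun _ => aemeasurable_quantile.aestronglyMeasurable) (memLp_two_quantile hρ)
      (unifIntegrable_of_dominated one_le_two ofNat_ne_top
        ((memLp_two_quantile hμ).abs.add (memLp_two_quantile hν).abs)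
        fun n => (ae_restrict_mem measurableSet_Ioo).mono fun u hu => hdom n u hu) hae
  refine tendsto_of_tendsto_of_tendsto_of_le_of_le tendsto_const_nhds hL2 (fun _ => zero_le)
    fun n => ?_
  simpa [W2] using Wp_le_eLpNorm_quantile_sub (μ := ρs n) (ν := ρ) two_pos

lemma tendsto_of_tendsto_Wp_one {μs : ℕ → ProbabilityMeasure ℝ} {μ : ProbabilityMeasure ℝ}
    (h : Tendsto (fun n => Wp 1 (μs n) μ) atTop (𝓝 0)) : Tendsto μs atTop (𝓝 μ) := by
  refine tendsto_iff_forall_lipschitz_integral_tendsto.2 fun f ⟨C, hC⟩ ⟨L, hf⟩ => ?_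
  have hint : ∀ ρ : ProbabilityMeasure ℝ, Integrable f ρ := fun ρ =>
    .of_bound hf.continuous.aestronglyMeasurable (‖f 0‖ + C) (ae_of_all _ fun x =>
      (norm_le_norm_add_norm_sub' (f x) (f 0)).trans (by simpa [dist_eq_norm] using hC x 0))
  refine tendsto_iff_edist_tendsto_0.2 (tendsto_of_tendsto_of_tendsto_of_le_of_le
    tendsto_const_nhds (by simpa using ENNReal.Tendsto.const_mul h (.inr (coe_ne_top (r := L))))
    (fun _ => zero_le) fun n => ?_)
  exact edist_integral_le_mul_Wp_one hf (hint _) (hint _)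

lemma tendsto_cdf_of_tendsto {μs : ℕ → ProbabilityMeasure ℝ} {μ : ProbabilityMeasure ℝ}
    (h : Tendsto μs atTop (𝓝 μ)) {t : ℝ} (ht : ContinuousAt (cdf μ) t) :
    Tendsto (fun n => cdf (μs n) t) atTop (𝓝 (cdf μ t)) := by
  have hatom : (μ : Measure ℝ) {t} = 0 := by
    rw [← measure_cdf (μ := (μ : Measure ℝ)), StieltjesFunction.measure_singleton,
      ht.continuousWithinAt.leftLim_eq, sub_self, ofReal_zero]
  simp only [cdf_eq_real]
  exact (ENNReal.tendsto_toReal (measure_ne_top _ _)).comp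
    (ProbabilityMeasure.tendsto_measure_of_null_frontier_of_tendsto' h (by rwa [frontier_Iic]))

lemma tendsto_iff_forall_continuous_bounded_integral_tendsto {Ω γ : Type*} [MeasurableSpace Ω]
    [TopologicalSpace Ω] [OpensMeasurableSpace Ω] {F : Filter γ} {μs : γ → ProbabilityMeasure Ω}
    {μ : ProbabilityMeasure Ω} :
    Tendsto μs F (𝓝 μ) ↔ ∀ f : Ω → ℝ, Continuous f → (∃ C, ∀ x, |f x| ≤ C) →
      Tendsto (fun i => ∫ x, f x ∂(μs i : Measure Ω)) F (𝓝 (∫ x, f x ∂(μ : Measure Ω))) := by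
  rw [ProbabilityMeasure.tendsto_iff_forall_integral_tendsto]
  refine ⟨fun h f hf ⟨C, hC⟩ => h (.ofNormedAddCommGroup f hf C hC), fun h f => ?_⟩
  exact h f f.continuous ⟨‖f‖, f.norm_coe_le_norm⟩

theorem order_interval_convergence_equiv_general (μ ν : Measure ℝ) (hμ : μ ∈ P2) (hν : ν ∈ P2)
    (ρs : ℕ → Measure ℝ) (ρ : Measure ℝ)
    (hρs : ∀ n, ρs n ∈ P2 ∧ StOrder μ (ρs n) ∧ StOrder (ρs n) ν)
    (hρ : ρ ∈ P2 ∧ StOrder μ ρ ∧ StOrder ρ ν) :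
    (W2Tendsto ρs ρ ↔
      ∀ p : ℝ, 1 ≤ p → p < 2 → Tendsto (fun n => Wp p (ρs n) ρ) atTop (nhds 0)) ∧
    (W2Tendsto ρs ρ ↔
      ∀ f : ℝ → ℝ, Continuous f → (∃ C : ℝ, ∀ x, |f x| ≤ C) →
        Tendsto (fun n => ∫ x, f x ∂(ρs n)) atTop (nhds (∫ x, f x ∂ρ))) := by
  obtain ⟨⟨hρP, hρ2⟩, -⟩ := hρ
  have := hμ.1
  have := hν.1
  have : ∀ n, IsProbabilityMeasure (ρs n) := fun n => (hρs n).1.1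
  let P : ℕ → ProbabilityMeasure ℝ := fun n => ⟨ρs n, inferInstance⟩
  let P₀ : ProbabilityMeasure ℝ := ⟨ρ, hρP⟩
  have hW2_Wp : W2Tendsto ρs ρ →
      ∀ p : ℝ, 1 ≤ p → p < 2 → Tendsto (fun n => Wp p (ρs n) ρ) atTop (nhds 0) :=
    fun h p hp₁ hp₂ => tendsto_of_tendsto_of_tendsto_of_le_of_le tendsto_const_nhds h
      (fun _ => zero_le) fun _ => Wp_mono_exponent (one_pos.trans_le hp₁) hp₂.le _
  have hWp_weak : (∀ p : ℝ, 1 ≤ p → p < 2 → Tendsto (fun n => Wp p (ρs n) ρ) atTop (nhds 0)) →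
      Tendsto P atTop (𝓝 P₀) :=
    fun h => tendsto_of_tendsto_Wp_one (h 1 le_rfl one_lt_two)
  have hweak_W2 : Tendsto P atTop (𝓝 P₀) → W2Tendsto ρs ρ := fun h =>
    tendsto_W2_of_ae_tendsto_quantile hρ2 hμ.2 hν.2
      (fun n _ hu => abs_quantile_le_of_stOrder (hρs n).2.1 (hρs n).2.2 hu)
      (ae_tendsto_quantile_of_tendsto_cdf fun _ ht => tendsto_cdf_of_tendsto h ht)
  have hweak :=
    tendsto_iff_forall_continuous_bounded_integral_tendsto (F := atTop) (μs := P) (μ := P₀)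
  exact ⟨⟨hW2_Wp, hweak_W2 ∘ hWp_weak⟩, ⟨hweak.1 ∘ hWp_weak ∘ hW2_Wp, hweak_W2 ∘ hweak.2⟩⟩

/-- On an order interval `[μ,ν] ⊆ 𝒫₂(ℝ)` of the stochastic order, for a
sequence `ρₙ ∈ [μ,ν]` and `ρ ∈ [μ,ν]`, the following are equivalent:
(i) `𝒲₂(ρₙ,ρ) → 0`; (ii) `𝒲_p(ρₙ,ρ) → 0` for all `1 ≤ p < 2`; (iii) `ρₙ → ρ` weakly. -/
theorem order_interval_convergence_equiv (μ ν : Measure ℝ) (hμ : μ ∈ P2) (hν : ν ∈ P2)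
    (hμν : StOrder μ ν) (ρs : ℕ → Measure ℝ) (ρ : Measure ℝ)
    (hρs : ∀ n, ρs n ∈ P2 ∧ StOrder μ (ρs n) ∧ StOrder (ρs n) ν)
    (hρ : ρ ∈ P2 ∧ StOrder μ ρ ∧ StOrder ρ ν) :
    (W2Tendsto ρs ρ ↔
      ∀ p : ℝ, 1 ≤ p → p < 2 → Tendsto (fun n => Wp p (ρs n) ρ) atTop (nhds 0)) ∧
    (W2Tendsto ρs ρ ↔
      ∀ f : ℝ → ℝ, Continuous f → (∃ C : ℝ, ∀ x, |f x| ≤ C) →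
        Tendsto (fun n => ∫ x, f x ∂(ρs n)) atTop (nhds (∫ x, f x ∂ρ))) :=
  order_interval_convergence_equiv_general μ ν hμ hν ρs ρ hρs hρ
end
end

section
/- There exists a sequence (μₙ) in 𝒫₂(ℝ) that converges to δ₀ in the 2-Wasserstein metric (hence is relatively compact) but has no upper bound and no lower bound in 𝒫₂(ℝ) with respect to the stochastic order. Concretely, μₙ = (1/(n² log n)) δ₋ₙ + (1 − 2/(n² log n)) δ₀ + (1/(n² log n)) δₙ for n ≥ 3 satisfies 𝒲₂(μₙ, δ₀)² = 2/log n → 0, but ∫₀^∞ (sup_n μₙ((u,∞))) u du = ∞. -/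
open MeasureTheory Filter Set ENNReal

noncomputable section

/-- The sequence `μₙ = (1/(n² log n)) δ₋ₙ + (1 − 2/(n² log n)) δ₀ + (1/(n² log n)) δₙ`. -/
def seqMu (n : ℕ) : Measure ℝ :=
  (ENNReal.ofReal (1 / ((n : ℝ) ^ 2 * Real.log n))) • Measure.dirac (-(n : ℝ)) +
  (ENNReal.ofReal (1 - 2 / ((n : ℝ) ^ 2 * Real.log n))) • Measure.dirac (0 : ℝ) +
  (ENNReal.ofReal (1 / ((n : ℝ) ^ 2 * Real.log n))) • Measure.dirac (n : ℝ)

/-!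
The measures `μₙ` put mass `1/(n² log n)` at `±n`, so their second moments `2/log n` tend to `0`.
An upper bound `ν` in the stochastic order must dominate their tails: testing the order against
the ramp from `n - 1` to `n` gives `ν(|x| ≥ n - 1) ≥ 1/(n² log n)`, and symmetrically for a lower
bound. By the layer-cake formula `∫ x² dν = 2 ∫₀^∞ ν(|x| ≥ t) t dt ≥ c ∑ 1/(n log n) = ∞`
(Cauchy condensation); the same estimate gives `∫₀^∞ (supₙ μₙ((u,∞))) u du = ∞`.
-/

lemma one_le_log_of_three_le {x : ℝ} (hx : 3 ≤ x) : 1 ≤ Real.log x := by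
  rw [Real.le_log_iff_exp_le (by linarith)]
  exact Real.exp_one_lt_three.le.trans hx

lemma Real.not_summable_one_div_natCast_mul_log :
    ¬ Summable (fun n : ℕ => 1 / ((n : ℝ) * Real.log n)) := by
  have h_nonneg : 0 ≤ᶠ[atTop] fun n : ℕ => 1 / ((n : ℝ) * Real.log n) :=
    Eventually.of_forall fun n => by
      have := Real.log_natCast_nonneg n
      positivity
  have h_anti : ∀ᶠ n : ℕ in atTop,
      1 / (((n + 1 : ℕ) : ℝ) * Real.log (n + 1 : ℕ)) ≤ 1 / ((n : ℝ) * Real.log n) := by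
    filter_upwards [eventually_ge_atTop 2] with n hn
    have hn' : (2 : ℝ) ≤ n := by exact_mod_cast hn
    have hlog : 0 < Real.log n := Real.log_pos (by linarith)
    push_cast
    gcongr <;> linarith
  have h_condensed :
      (fun k : ℕ => (2 : ℝ) ^ k * (1 / (((2 ^ k : ℕ) : ℝ) * Real.log (2 ^ k : ℕ))))
        = fun k : ℕ => (Real.log 2)⁻¹ * (1 / (k : ℝ)) := by
    ext k
    rcases k.eq_zero_or_pos with rfl | hk
    · simp
    · push_cast
      rw [Real.log_pow]
      have : (0 : ℝ) < Real.log 2 := Real.log_pos one_lt_two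
      field_simp
  rw [← summable_condensed_iff_of_eventually_nonneg h_nonneg h_anti, h_condensed,
    summable_mul_left_iff (inv_ne_zero (Real.log_pos one_lt_two).ne')]
  exact Real.not_summable_one_div_natCast

lemma tsum_le_lintegral_Ioi_mul_of_antitone {g : ℝ → ℝ≥0∞} (hg : Antitone g) :
    ∑' k : ℕ, g (k + 2) * ENNReal.ofReal (k + 1) ≤
      ∫⁻ t in Ioi 0, g t * ENNReal.ofReal t := by
  have h_disj : Pairwise (Function.onFun Disjoint fun k : ℕ => Ico ((k : ℝ) + 1) (k + 2)) := by
    convert (pairwise_disjoint_Ico_add_intCast (1 : ℝ)).comp_of_injective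
      (f := ((↑) : ℕ → ℤ)) Nat.cast_injective using 2 with k
    simp only [Int.cast_natCast]
    ring_nf
  calc ∑' k : ℕ, g (k + 2) * ENNReal.ofReal (k + 1)
      ≤ ∑' k : ℕ, ∫⁻ t in Ico ((k : ℝ) + 1) (k + 2), g t * ENNReal.ofReal t := by
        refine ENNReal.tsum_le_tsum fun k => ?_
        calc g (k + 2) * ENNReal.ofReal (k + 1)
            = ∫⁻ _ in Ico ((k : ℝ) + 1) (k + 2), g (k + 2) * ENNReal.ofReal (k + 1) := by
              rw [setLIntegral_const, Real.volume_Ico]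
              norm_num
          _ ≤ ∫⁻ t in Ico ((k : ℝ) + 1) (k + 2), g t * ENNReal.ofReal t :=
              setLIntegral_mono' measurableSet_Ico fun t ht =>
                mul_le_mul' (hg ht.2.le) (ENNReal.ofReal_le_ofReal ht.1)
    _ = ∫⁻ t in ⋃ k : ℕ, Ico ((k : ℝ) + 1) (k + 2), g t * ENNReal.ofReal t :=
        (lintegral_iUnion (fun _ => measurableSet_Ico) h_disj _).symm
    _ ≤ ∫⁻ t in Ioi 0, g t * ENNReal.ofReal t :=
        lintegral_mono_set <| iUnion_subset fun k t ht =>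
          mem_Ioi.2 (by linarith [ht.1, (k.cast_nonneg : (0 : ℝ) ≤ k)])

lemma lintegral_Ioi_mul_eq_top_of_antitone {g : ℝ → ℝ≥0∞} (hg : Antitone g)
    (h : ∀ n : ℕ, 3 ≤ n → ENNReal.ofReal (1 / ((n : ℝ) ^ 2 * Real.log n)) ≤ g (n - 1)) :
    ∫⁻ t in Ioi 0, g t * ENNReal.ofReal t = ⊤ := by
  set c : ℕ → ℝ := fun k => 1 / (3 * (((k + 3 : ℕ) : ℝ) * Real.log (k + 3 : ℕ)))
  have hc_tsum : ∑' k, ENNReal.ofReal (c k) = ⊤ := by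
    by_contra hfin
    have hc : Summable c := by
      refine (ENNReal.summable_toReal hfin).congr fun k => ENNReal.toReal_ofReal ?_
      have := Real.log_natCast_nonneg (k + 3)
      positivity
    refine Real.not_summable_one_div_natCast_mul_log ((summable_nat_add_iff 3).1 ?_)
    simpa [c, mul_div_assoc', div_div_eq_mul_div, ← div_div] using hc.mul_left 3
  refine top_le_iff.1 (hc_tsum ▸ le_trans (ENNReal.tsum_le_tsum fun k => ?_)
    (tsum_le_lintegral_Ioi_mul_of_antitone hg))
  have hk := h (k + 3) (by omega)
  push_cast at hk ⊢
  rw [show (k : ℝ) + 3 - 1 = k + 2 by ring] at hk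
  have hk0 : (0 : ℝ) ≤ k := k.cast_nonneg
  have hlog : 1 ≤ Real.log ((k : ℝ) + 3) := one_le_log_of_three_le (by linarith)
  -- with `n = k + 3`: `(n - 2) / (n² log n) ≥ 1 / (3 n log n)` since `n ≥ 3`
  calc ENNReal.ofReal (c k)
      ≤ ENNReal.ofReal (1 / (((k : ℝ) + 3) ^ 2 * Real.log ((k : ℝ) + 3)) * (k + 1)) := by
        refine ENNReal.ofReal_le_ofReal ?_
        simp only [c]
        push_cast
        rw [div_mul_eq_mul_div, one_mul, div_le_div_iff₀ (by positivity) (by positivity)]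
        nlinarith [mul_nonneg (mul_nonneg hk0 (by linarith : (0 : ℝ) ≤ k + 3))
          (zero_le_one.trans hlog)]
    _ ≤ g (k + 2) * ENNReal.ofReal (k + 1) := by
        rw [ENNReal.ofReal_mul (by positivity)]
        gcongr

def symmThreePoint (A a : ℝ) : Measure ℝ :=
  ENNReal.ofReal (1 / A) • Measure.dirac (-a) + ENNReal.ofReal (1 - 2 / A) • Measure.dirac 0 +
    ENNReal.ofReal (1 / A) • Measure.dirac a

lemma seqMu_eq_symmThreePoint (n : ℕ) :
    seqMu n = symmThreePoint ((n : ℝ) ^ 2 * Real.log n) n := rfl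

section symmThreePoint

variable {A : ℝ} (a : ℝ)

lemma lintegral_symmThreePoint (g : ℝ → ℝ≥0∞) :
    ∫⁻ x, g x ∂symmThreePoint A a = ENNReal.ofReal (1 / A) * g (-a) +
      ENNReal.ofReal (1 - 2 / A) * g 0 + ENNReal.ofReal (1 / A) * g a := by
  simp only [symmThreePoint, lintegral_add_measure, lintegral_smul_measure, lintegral_dirac,
    smul_eq_mul]

lemma isProbabilityMeasure_symmThreePoint (hA : 2 ≤ A) :
    IsProbabilityMeasure (symmThreePoint A a) := by
  constructor
  have h_mid : 0 ≤ 1 - 2 / A := sub_nonneg.2 ((div_le_one (by linarith)).2 hA)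
  have h_total := lintegral_symmThreePoint (A := A) a 1
  simp only [lintegral_one, Pi.one_apply, mul_one] at h_total
  rw [h_total, ← ENNReal.ofReal_add (by positivity) h_mid,
    ← ENNReal.ofReal_add (by positivity) (by positivity), ← ENNReal.ofReal_one]
  ring_nf

lemma ofReal_one_div_le_symmThreePoint {s : Set ℝ} (hs : a ∈ s) :
    ENNReal.ofReal (1 / A) ≤ symmThreePoint A a s := by
  simp [symmThreePoint, Measure.dirac_apply_of_mem hs]

lemma ofReal_one_div_le_symmThreePoint_of_neg_mem {s : Set ℝ} (hs : -a ∈ s) :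
    ENNReal.ofReal (1 / A) ≤ symmThreePoint A a s := by
  simp [symmThreePoint, Measure.dirac_apply_of_mem hs, add_assoc]

lemma lintegral_sq_symmThreePoint (hA : 0 ≤ A) :
    ∫⁻ x, ENNReal.ofReal (x ^ 2) ∂symmThreePoint A a = ENNReal.ofReal (2 * a ^ 2 / A) := by
  rw [lintegral_symmThreePoint, neg_sq, zero_pow two_ne_zero, ENNReal.ofReal_zero, mul_zero,
    add_zero, ← ENNReal.ofReal_mul (by positivity),
    ← ENNReal.ofReal_add (by positivity) (by positivity)]
  ring_nf

lemma integrable_sq_symmThreePoint (hA : 0 ≤ A) :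
    Integrable (fun x : ℝ => x ^ 2) (symmThreePoint A a) := by
  refine ⟨by fun_prop, ?_⟩
  simp_rw [HasFiniteIntegral, Real.enorm_eq_ofReal (sq_nonneg _), lintegral_sq_symmThreePoint a hA]
  exact ENNReal.ofReal_lt_top

end symmThreePoint

lemma Wp_dirac (p : ℝ) (μ : Measure ℝ) [IsProbabilityMeasure μ] (a : ℝ) :
    Wp p μ (Measure.dirac a) = (∫⁻ x, ENNReal.ofReal (|x - a| ^ p) ∂μ) ^ (1 / p) := by
  have h_cost : ∀ π : Measure (ℝ × ℝ), π.map Prod.fst = μ → π.map Prod.snd = Measure.dirac a →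
      ∫⁻ q, ENNReal.ofReal (|q.1 - q.2| ^ p) ∂π = ∫⁻ x, ENNReal.ofReal (|x - a| ^ p) ∂μ := by
    intro π h_fst h_snd
    have h_ae : ∀ᵐ q ∂π, q.2 = a := by
      refine ae_of_ae_map (p := fun y : ℝ => y = a) measurable_snd.aemeasurable ?_
      rw [h_snd]
      exact (ae_dirac_iff (measurableSet_singleton a)).2 rfl
    rw [← h_fst, lintegral_map (by fun_prop) measurable_fst]
    exact lintegral_congr_ae (h_ae.mono fun q hq => by simp only [hq])
  have h_fst : (μ.map fun x => (x, a)).map Prod.fst = μ := by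
    rw [Measure.map_map measurable_fst (by fun_prop)]
    exact Measure.map_id
  have h_snd : (μ.map fun x => (x, a)).map Prod.snd = Measure.dirac a := by
    rw [Measure.map_map measurable_snd (by fun_prop)]
    simp [Function.comp_def]
  refine le_antisymm (iInf₂_le_of_le _ h_fst (iInf_le_of_le h_snd (by rw [h_cost _ h_fst h_snd])))
    (le_iInf₂ fun π h₁ => le_iInf fun h₂ => by rw [h_cost π h₁ h₂])

section StOrder

variable {μ ν : Measure ℝ}

lemma StOrder.measure_Ici_add_one_le [IsFiniteMeasure μ] [IsFiniteMeasure ν] (h : StOrder μ ν)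
    (a : ℝ) : μ (Ici (a + 1)) ≤ ν (Ioi a) := by
  set f : ℝ → ℝ := fun x => min (max (x - a) 0) 1
  have hf_mono : Monotone f := fun x y hxy => by simp only [f]; gcongr
  have hf_bound : ∀ x, |f x| ≤ 1 := fun x => abs_le.2 ⟨by simp [f], min_le_right _ _⟩
  have hf_int : ∀ ρ : Measure ℝ, IsFiniteMeasure ρ → Integrable f ρ := fun ρ _ =>
    .of_bound hf_mono.measurable.aestronglyMeasurable 1 (ae_of_all _ hf_bound)
  have h_lower : (Ici (a + 1)).indicator 1 ≤ f :=
    indicator_le' (fun x hx => by simp [f, le_sub_iff_add_le'.2 (mem_Ici.1 hx)])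
      (fun x _ => by simp [f])
  have h_upper : f ≤ (Ioi a).indicator 1 :=
    le_indicator (fun x _ => min_le_right _ _)
      (fun x hx => by simp [f, sub_nonpos.2 (not_lt.1 (mt mem_Ioi.2 hx))])
  rw [← ofReal_measureReal, ← ofReal_measureReal]
  refine ENNReal.ofReal_le_ofReal ?_
  calc μ.real (Ici (a + 1)) = ∫ x, (Ici (a + 1)).indicator 1 x ∂μ :=
        (integral_indicator_one measurableSet_Ici).symm
    _ ≤ ∫ x, f x ∂μ :=
        integral_mono ((integrable_const 1).indicator measurableSet_Ici) (hf_int μ inferInstance)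
          h_lower
    _ ≤ ∫ x, f x ∂ν := h f hf_mono ⟨1, hf_bound⟩
    _ ≤ ∫ x, (Ioi a).indicator 1 x ∂ν :=
        integral_mono (hf_int ν inferInstance) ((integrable_const 1).indicator measurableSet_Ioi)
          h_upper
    _ = ν.real (Ioi a) := integral_indicator_one measurableSet_Ioi

lemma StOrder.measure_Iic_le [IsProbabilityMeasure μ] [IsProbabilityMeasure ν] (h : StOrder μ ν)
    (a : ℝ) : ν (Iic a) ≤ μ (Iio (a + 1)) := by
  rw [← compl_Ioi, ← compl_Ici, prob_compl_eq_one_sub measurableSet_Ioi,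
    prob_compl_eq_one_sub measurableSet_Ici]
  exact tsub_le_tsub_left (h.measure_Ici_add_one_le a) 1

end StOrder

lemma not_integrable_sq_of_tail {ν : Measure ℝ}
    (h : ∀ n : ℕ, 3 ≤ n →
      ENNReal.ofReal (1 / ((n : ℝ) ^ 2 * Real.log n)) ≤ ν {x | (n : ℝ) - 1 ≤ |x|}) :
    ¬ Integrable (fun x : ℝ => x ^ 2) ν := by
  intro hν
  have h_layer := lintegral_rpow_eq_lintegral_meas_le_mul ν (f := fun x => |x|)
    (ae_of_all _ abs_nonneg) (by fun_prop) two_pos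
  have h_top : ∫⁻ t in Ioi 0, ν {x | t ≤ |x|} * ENNReal.ofReal t = ⊤ :=
    lintegral_Ioi_mul_eq_top_of_antitone (fun s t hst => measure_mono fun x hx => hst.trans hx) h
  rw [show (2 : ℝ) - 1 = 1 by norm_num] at h_layer
  simp only [Real.rpow_one, Real.rpow_two, sq_abs, h_top] at h_layer
  simpa [HasFiniteIntegral, Real.enorm_eq_ofReal (sq_nonneg _), h_layer] using hν.2

lemma two_le_natCast_sq_mul_log {n : ℕ} (hn : 3 ≤ n) : 2 ≤ (n : ℝ) ^ 2 * Real.log n := by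
  have hn' : (3 : ℝ) ≤ n := by exact_mod_cast hn
  nlinarith [one_le_log_of_three_le hn']

lemma isProbabilityMeasure_seqMu {n : ℕ} (hn : 3 ≤ n) : IsProbabilityMeasure (seqMu n) :=
  isProbabilityMeasure_symmThreePoint _ (two_le_natCast_sq_mul_log hn)

lemma seqMu_mem_P2 {n : ℕ} (hn : 3 ≤ n) : seqMu n ∈ P2 :=
  ⟨isProbabilityMeasure_seqMu hn,
    integrable_sq_symmThreePoint _ (by linarith [two_le_natCast_sq_mul_log hn])⟩

lemma W2_seqMu_dirac_zero {n : ℕ} (hn : 3 ≤ n) :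
    W2 (seqMu n) (Measure.dirac 0) = ENNReal.ofReal (2 / Real.log n) ^ (1 / 2 : ℝ) := by
  have := isProbabilityMeasure_seqMu hn
  have hn0 : (n : ℝ) ≠ 0 := by positivity
  rw [W2, Wp_dirac]
  simp only [sub_zero, Real.rpow_two, sq_abs]
  rw [seqMu_eq_symmThreePoint,
    lintegral_sq_symmThreePoint _ (by linarith [two_le_natCast_sq_mul_log hn])]
  congr 2
  field_simp

lemma tendsto_W2_seqMu_dirac_zero :
    Tendsto (fun n => W2 (seqMu n) (Measure.dirac 0)) atTop (nhds 0) := by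
  have h_log := (Real.tendsto_log_atTop.comp tendsto_natCast_atTop_atTop).const_div_atTop 2
  have h_lim := ((ENNReal.continuous_rpow_const (y := 1 / 2)).tendsto _).comp
    (ENNReal.tendsto_ofReal h_log)
  rw [ENNReal.ofReal_zero, ENNReal.zero_rpow_of_pos (by norm_num)] at h_lim
  refine h_lim.congr' ?_
  filter_upwards [eventually_ge_atTop 3] with n hn
  exact (W2_seqMu_dirac_zero hn).symm

section Tail

variable {ν : Measure ℝ} [IsProbabilityMeasure ν] {n : ℕ}

lemma StOrder.ofReal_le_measure_tail_of_seqMu_left (hn : 3 ≤ n) (h : StOrder (seqMu n) ν) :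
    ENNReal.ofReal (1 / ((n : ℝ) ^ 2 * Real.log n)) ≤ ν {x | (n : ℝ) - 1 ≤ |x|} := by
  have := isProbabilityMeasure_seqMu hn
  calc _ ≤ seqMu n (Ici ((n : ℝ) - 1 + 1)) := ofReal_one_div_le_symmThreePoint _ (by simp)
    _ ≤ ν (Ioi ((n : ℝ) - 1)) := h.measure_Ici_add_one_le _
    _ ≤ ν {x | (n : ℝ) - 1 ≤ |x|} :=
        measure_mono fun x hx => (mem_Ioi.1 hx).le.trans (le_abs_self x)

lemma StOrder.ofReal_le_measure_tail_of_seqMu_right (hn : 3 ≤ n) (h : StOrder ν (seqMu n)) :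
    ENNReal.ofReal (1 / ((n : ℝ) ^ 2 * Real.log n)) ≤ ν {x | (n : ℝ) - 1 ≤ |x|} := by
  have := isProbabilityMeasure_seqMu hn
  calc _ ≤ seqMu n (Iic (-n)) := ofReal_one_div_le_symmThreePoint_of_neg_mem _ (by simp)
    _ ≤ ν (Iio (-n + 1)) := h.measure_Iic_le _
    _ ≤ ν {x | (n : ℝ) - 1 ≤ |x|} :=
        measure_mono fun x hx => show (n : ℝ) - 1 ≤ |x| by linarith [neg_abs_le x, mem_Iio.1 hx]

end Tail

/-- The sequence `(μₙ)` lies in `𝒫₂(ℝ)`, satisfies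
`𝒲₂(μₙ, δ₀)² = 2/log n → 0` (hence is relatively compact), but the right-tail
integrability criterion fails, and it has neither an upper bound nor a lower bound
in `𝒫₂(ℝ)` for the stochastic order. -/
theorem compact_not_order_bounded :
    (∀ n : ℕ, 3 ≤ n → seqMu n ∈ P2) ∧
    (∀ n : ℕ, 3 ≤ n →
      (W2 (seqMu n) (Measure.dirac 0)) ^ 2 = ENNReal.ofReal (2 / Real.log n)) ∧
    Tendsto (fun n => W2 (seqMu n) (Measure.dirac 0)) atTop (nhds 0) ∧
    (∫⁻ u in Set.Ioi (0:ℝ),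
        (⨆ (n : ℕ) (_ : 3 ≤ n), seqMu n (Set.Ioi u)) * ENNReal.ofReal u) = ⊤ ∧
    ¬ (∃ ν ∈ P2, ∀ n : ℕ, 3 ≤ n → StOrder (seqMu n) ν) ∧
    ¬ (∃ ν ∈ P2, ∀ n : ℕ, 3 ≤ n → StOrder ν (seqMu n)) := by
  refine ⟨fun n hn => seqMu_mem_P2 hn, fun n hn => ?_, tendsto_W2_seqMu_dirac_zero, ?_, ?_, ?_⟩
  · rw [W2_seqMu_dirac_zero hn, ← ENNReal.rpow_natCast, ← ENNReal.rpow_mul]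
    norm_num
  · exact lintegral_Ioi_mul_eq_top_of_antitone
      (fun s t hst => iSup₂_mono fun n _ => measure_mono (Ioi_subset_Ioi hst))
      fun n hn => le_iSup₂_of_le n hn
        (ofReal_one_div_le_symmThreePoint _ (mem_Ioi.2 (sub_one_lt _)))
  · rintro ⟨ν, ⟨hν, hν_sq⟩, h⟩
    exact not_integrable_sq_of_tail (fun n hn => (h n hn).ofReal_le_measure_tail_of_seqMu_left hn)
      hν_sq
  · rintro ⟨ν, ⟨hν, hν_sq⟩, h⟩
    exact not_integrable_sq_of_tail (fun n hn => (h n hn).ofReal_le_measure_tail_of_seqMu_right hn)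
      hν_sq
end
end
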